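/- arXiv:1505.00887 — 2 statements merged into one kernel-verified Lean document; each statement's English description precedes it below -/
import Mathlib

section
/- If n ≡ 0 (mod 4), say n = 4k, then the sensitivity of the simplified weighted sum function at the all-ones input is exactly 2, the two sensitive coordinates being k and 3k. -/
open Finset

/-- the weighted sum `s(X) = (∑ k, k·x_k) mod n`, as an element of `ZMod n`. -/
def wsS {n : ℕ} [NeZero n] (X : ZMod n → Bool) : ZMod n :=
  ∑ i : ZMod n, if X i then i else 0

/-- the simplified weighted sum function `f(X) = x_{s(X)}`. -/
def wsF {n : ℕ} [NeZero n] (X : ZMod n → Bool) : Bool := X (wsS X)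

/-- the sensitivity `Sen(f, X)`: the number of coordinates whose flip changes `f`. -/
def wsSens {n : ℕ} [NeZero n] (X : ZMod n → Bool) : ℕ :=
  (Finset.univ.filter fun i : ZMod n =>
    wsF (Function.update X i (!X i)) ≠ wsF X).card

lemma sum_zmod (n : ℕ) [NeZero n] : ∑ i : ZMod n, i = ((∑ i ∈ Finset.range n, i : ℕ) : ZMod n) := by
  rw [Nat.cast_sum]
  refine Finset.sum_nbij' (fun a => a.val) (fun a => (a : ZMod n)) ?_ ?_ ?_ ?_ ?_
  · intro a _; exact Finset.mem_range.mpr (ZMod.val_lt a)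
  · intro a _; exact mem_univ _
  · intro a _; simp [ZMod.natCast_val, ZMod.cast_id]
  · intro a ha; exact ZMod.val_cast_of_lt (Finset.mem_range.mp ha)
  · intro a _; simp [ZMod.natCast_val, ZMod.cast_id]

lemma wsS_const (n k : ℕ) [NeZero n] (hk : 1 ≤ k) (hn : n = 4 * k) :
    wsS (fun _ : ZMod n => true) = ((2 * k : ℕ) : ZMod n) := by
  have h : wsS (fun _ : ZMod n => true) = ∑ i : ZMod n, i := by
    unfold wsS; simp
  rw [h, sum_zmod, Finset.sum_range_id]
  subst hn
  have h1 : 4 * k * (4 * k - 1) / 2 = 2 * k * (4 * k - 1) := by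
    rw [show 4 * k * (4 * k - 1) = 2 * k * (4 * k - 1) * 2 by ring, Nat.mul_div_cancel _ (by norm_num)]
  rw [h1, Nat.mul_sub, Nat.cast_sub (by nlinarith [hk])]
  push_cast
  have h4 : ((4 * k : ℕ) : ZMod (4 * k)) = 0 := ZMod.natCast_self _
  push_cast at h4
  rw [h4]; ring_nf; linear_combination (-(1:ZMod (4*k)))*h4

lemma wsS_update (n : ℕ) [NeZero n] (i : ZMod n) :
    wsS (Function.update (fun _ : ZMod n => true) i false) = (∑ j : ZMod n, j) - i := by
  unfold wsS
  have h : ∀ j : ZMod n, (if Function.update (fun _ : ZMod n => true) i false j then j else 0)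
      = j - (if j = i then j else 0) := by
    intro j
    rcases eq_or_ne j i with rfl | hne
    · simp
    · simp [Function.update_apply, hne]
  simp_rw [h]
  rw [Finset.sum_sub_distrib, Finset.sum_ite_eq' Finset.univ i (fun j => j)]
  simp

lemma cast3k (k : ℕ) [NeZero (4*k)] : ((3 * k : ℕ) : ZMod (4*k)) = -(k : ZMod (4*k)) := by
  have h4 : ((4 * k : ℕ) : ZMod (4 * k)) = 0 := ZMod.natCast_self _
  push_cast at h4 ⊢
  linear_combination h4

lemma key (k : ℕ) (hk : 1 ≤ k) [NeZero (4*k)] (i : ZMod (4*k)) :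
    ((2 * k : ℕ) : ZMod (4*k)) - i = i ↔
      i = (k : ZMod (4*k)) ∨ i = ((3 * k : ℕ) : ZMod (4*k)) := by
  constructor
  · intro h
    have hi : ((i.val : ℕ) : ZMod (4*k)) = i := by simp [ZMod.natCast_val, ZMod.cast_id]
    have h2 : ((2 * k : ℕ) : ZMod (4*k)) = ((2 * i.val : ℕ) : ZMod (4*k)) := by
      push_cast at *
      linear_combination h - 2 * hi
    have h3 : (2 * k) ≡ (2 * i.val) [MOD 4 * k] := (ZMod.natCast_eq_natCast_iff _ _ _).mp h2
    have h3' : 2 * k ≡ 2 * i.val [MOD 2 * (2 * k)] := by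
      rwa [show (2:ℕ) * (2 * k) = 4 * k from by ring]
    have h4 : k ≡ i.val [MOD 2 * k] := Nat.ModEq.mul_left_cancel' two_ne_zero h3'
    have h5 : i.val % (2 * k) = k := by
      have := h4.symm
      rwa [Nat.ModEq, Nat.mod_eq_of_lt (show k < 2 * k by omega)] at this
    have h6 : i.val < 4 * k := ZMod.val_lt i
    have h7 := Nat.div_add_mod i.val (2 * k)
    have h8 : i.val / (2 * k) < 2 := Nat.div_lt_of_lt_mul (by omega)
    set q := i.val / (2 * k) with hqdef
    clear_value q
    have hq01 : q = 0 ∨ q = 1 := by omega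
    rcases hq01 with hq | hq <;> rw [hq, h5] at h7
    · left; rw [← hi, show i.val = k by omega]
    · right; rw [← hi, show i.val = 3 * k by omega]
  · rintro (rfl | rfl)
    · push_cast
      ring
    · rw [cast3k]
      push_cast
      have h4 : ((4 * k : ℕ) : ZMod (4 * k)) = 0 := ZMod.natCast_self _
      push_cast at h4
      linear_combination h4

theorem stmt_6 (n k : ℕ) [NeZero n] (hk : 1 ≤ k) (hn : n = 4 * k) :
    wsSens (fun _ : ZMod n => true) = 2 ∧
      ∀ i : ZMod n,
        wsF (Function.update (fun _ : ZMod n => true) i (!(true : Bool))) ≠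
            wsF (fun _ : ZMod n => true) ↔ i = (k : ZMod n) ∨ i = ((3 * k : ℕ) : ZMod n) := by
  subst hn
  have hs : (∑ j : ZMod (4*k), j) = ((2*k:ℕ):ZMod (4*k)) := by
    have h := wsS_const (4*k) k hk rfl
    unfold wsS at h
    simpa using h
  have hiff : ∀ i : ZMod (4*k),
      (wsF (Function.update (fun _ : ZMod (4*k) => true) i (!(true : Bool))) ≠
        wsF (fun _ : ZMod (4*k) => true)) ↔
      (i = (k : ZMod (4*k)) ∨ i = ((3*k:ℕ) : ZMod (4*k))) := by
    intro i
    rw [← key k hk i]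
    show (wsF (Function.update (fun _ : ZMod (4*k) => true) i false) ≠ _) ↔ _
    unfold wsF
    rw [wsS_update, hs, Function.update_apply]
    rcases eq_or_ne (((2*k:ℕ):ZMod (4*k)) - i) i with he | he <;> simp [he]
  refine ⟨?_, hiff⟩
  unfold wsSens
  have hset : (Finset.univ.filter fun i : ZMod (4*k) =>
      wsF (Function.update (fun _ : ZMod (4*k) => true) i (!(fun _ : ZMod (4*k) => true) i)) ≠
        wsF (fun _ : ZMod (4*k) => true)) =
      {(k : ZMod (4*k)), ((3*k:ℕ) : ZMod (4*k))} := by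
    ext i
    simp only [mem_filter, mem_univ, true_and, mem_insert, mem_singleton]
    exact hiff i
  rw [hset, card_insert_of_notMem, card_singleton]
  rw [mem_singleton]
  intro heq
  have hm : (k : ℕ) ≡ 3 * k [MOD 4 * k] := (ZMod.natCast_eq_natCast_iff _ _ _).mp heq
  have hd : 4 * k ∣ 3 * k - k := (Nat.modEq_iff_dvd' (by omega)).mp hm
  have := Nat.le_of_dvd (by omega) hd
  omega
end

section
/- Let p > 4 be prime. Then the minimal sensitivity of the simplified weighted sum function on p variables equals 1: every input has sensitivity at least 1, and the input with x_0 = 1 and all other coordinates 0 has sensitivity exactly 1. -/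
open Finset

/-! Suppose no flip changes `f(X)` and let `s = s(X)`; flipping `x_i` moves the weighted sum to
`s ± i`, so `X (s + i) = X s` for every zero `i` of `X` and `X (s - i) = X s` for every one
(unless the new sum is `i` itself). Flipping `x_0` shows `s ≠ 0`. If `X s` is false, the zeros
are closed under `+ s`, which generates `ZMod p`, forcing `X = 0` and `s = 0`. If `X s` is true,
flipping `s / 2` shows that `X (s / 2)` is false; then the set `T` of ones is closed under
`i ↦ s - i`, so `|T| • s = 2 • ∑ T = 2 • s` and `|T| = 2`, while `i ↦ s + i` injects the zeros
into `T`, so `p ≤ 4`. -/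

open Function

lemma Finset.card_nsmul_eq_two_nsmul_sum_of_sub_mem {G : Type*} [AddCommGroup G]
    (T : Finset G) (s : G) (hT : ∀ i ∈ T, s - i ∈ T) :
    T.card • s = 2 • ∑ i ∈ T, i := by
  have hreflect : ∑ i ∈ T, (s - i) = ∑ i ∈ T, i :=
    sum_nbij' (s - ·) (s - ·) hT hT (fun _ _ => sub_sub_cancel s _)
      (fun _ _ => sub_sub_cancel s _) (fun _ _ => rfl)
  rw [sum_sub_distrib, sum_const, sub_eq_iff_eq_add] at hreflect
  rw [hreflect, two_nsmul]

lemma ZMod.forall_of_add_mem {p : ℕ} [Fact p.Prime] {P : ZMod p → Prop} {a s : ZMod p}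
    (hs : s ≠ 0) (ha : P a) (hadd : ∀ x, P x → P (x + s)) (x : ZMod p) : P x := by
  have hmul : ∀ k : ℕ, P (a + k * s) := by
    intro k
    induction k with
    | zero => simpa using ha
    | succ k ih => simpa [add_mul, add_assoc] using hadd _ ih
  simpa [div_mul_cancel₀ _ hs] using hmul ((x - a) / s).val

lemma ZMod.prime_le_four_of_sub_mem {p : ℕ} [Fact p.Prime] (T : Finset (ZMod p))
    (hT : T ≠ univ) {s : ZMod p} (hs : s ≠ 0) (hsum : ∑ i ∈ T, i = s)
    (hsub : ∀ i ∈ T, s - i ∈ T) (hadd : ∀ i ∉ T, s + i ∈ T) : p ≤ 4 := by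
  have hcard_lt : T.card < p := by simpa using (card_lt_iff_ne_univ T).mpr hT
  have hcard_eq : T.card = 2 ∨ p ≤ 2 := by
    have hnsmul := T.card_nsmul_eq_two_nsmul_sum_of_sub_mem s hsub
    rw [hsum, nsmul_eq_mul, nsmul_eq_mul] at hnsmul
    have hcast : ((T.card : ℕ) : ZMod p) = ((2 : ℕ) : ZMod p) := by
      exact_mod_cast mul_right_cancel₀ hs hnsmul
    rw [ZMod.natCast_eq_natCast_iff', Nat.mod_eq_of_lt hcard_lt] at hcast
    rcases lt_or_ge 2 p with h | h
    · exact .inl (hcast.trans (Nat.mod_eq_of_lt h))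
    · exact .inr h
  have hcompl : Tᶜ.card ≤ T.card :=
    card_le_card_of_injOn (s + ·) (fun i hi => hadd i (by simpa using hi))
      (fun _ _ _ _ h => add_left_cancel h)
  have hsplit : Tᶜ.card + T.card = p := by
    rw [card_compl, ZMod.card]; omega
  omega

section

variable {n : ℕ} [NeZero n]

lemma wsS_update_s9 (X : ZMod n → Bool) (i : ZMod n) (b : Bool) :
    wsS (update X i b) = wsS X - (if X i then i else 0) + (if b then i else 0) := by
  have hsplit : ∀ Y : ZMod n → Bool, wsS Y
      = (if Y i then i else 0) + ∑ j ∈ univ.erase i, (if Y j then j else 0) :=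
    fun Y => (add_sum_erase _ _ (mem_univ i)).symm
  have hrest : ∑ j ∈ univ.erase i, (if update X i b j then j else 0)
      = ∑ j ∈ univ.erase i, (if X j then j else 0) :=
    sum_congr rfl fun j hj => by rw [update_of_ne (ne_of_mem_erase hj)]
  rw [hsplit, hsplit X, hrest, update_self]
  ring

lemma wsS_flip_of_false {X : ZMod n → Bool} {i : ZMod n} (hi : X i = false) :
    wsS (update X i (!X i)) = wsS X + i := by
  simp [wsS_update_s9, hi]

lemma wsS_flip_of_true {X : ZMod n → Bool} {i : ZMod n} (hi : X i = true) :
    wsS (update X i (!X i)) = wsS X - i := by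
  simp [wsS_update_s9, hi]

lemma wsS_eq_sum_filter (X : ZMod n → Bool) : wsS X = ∑ i ∈ univ.filter (X · = true), i :=
  (sum_filter _ _).symm

lemma wsF_flip_zero_ne {X : ZMod n → Bool} (hs : wsS X = 0) :
    wsF (update X 0 (!X 0)) ≠ wsF X := by
  have hflip : wsS (update X 0 (!X 0)) = 0 := by simp [wsS_update_s9, hs]
  simp [wsF, hflip, hs]

lemma wsF_flip_ne_of_add_self {X : ZMod n → Bool} {h : ZMod n} (hh : h + h = wsS X)
    (hXs : X (wsS X) = true) (hXh : X h = true) : wsF (update X h (!X h)) ≠ wsF X := by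
  have hflip : wsS (update X h (!X h)) = h := by
    rw [wsS_flip_of_true hXh, ← hh, add_sub_cancel_right]
  rw [wsF, wsF, hflip, update_self, hXs, hXh]
  decide

lemma apply_wsS_add_eq {X : ZMod n → Bool} {i : ZMod n}
    (hX : wsF (update X i (!X i)) = wsF X) (hi : X i = false) (hs : wsS X ≠ 0) :
    X (wsS X + i) = X (wsS X) := by
  have hne : wsS X + i ≠ i := fun h => hs (by simpa using h)
  simpa [wsF, wsS_flip_of_false hi, update_of_ne hne] using hX

lemma apply_wsS_sub_eq {X : ZMod n → Bool} {i : ZMod n}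
    (hX : wsF (update X i (!X i)) = wsF X) (hi : X i = true) (hne : wsS X - i ≠ i) :
    X (wsS X - i) = X (wsS X) := by
  simpa [wsF, wsS_flip_of_true hi, update_of_ne hne] using hX

lemma wsSens_pos_iff {X : ZMod n → Bool} :
    0 < wsSens X ↔ ∃ i, wsF (update X i (!X i)) ≠ wsF X := by
  simp [wsSens, card_pos, filter_nonempty_iff]

lemma wsSens_indicator_zero : wsSens (fun i : ZMod n => decide (i = 0)) = 1 := by
  set X : ZMod n → Bool := fun i => decide (i = 0)
  have hs : wsS X = 0 := sum_eq_zero fun i _ => by by_cases h : i = 0 <;> simp [X, h]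
  have hsens : (univ.filter fun i => wsF (update X i (!X i)) ≠ wsF X) = {0} := by
    ext i
    simp only [mem_filter, mem_univ, true_and, mem_singleton]
    refine ⟨fun hi => ?_, fun hi => hi ▸ wsF_flip_zero_ne hs⟩
    by_contra hi0
    have hXi : X i = false := by simp [X, hi0]
    exact hi (by rw [wsF, wsF, wsS_flip_of_false hXi, hs, zero_add, update_self]; simp [X, hi0])
  rw [wsSens, hsens, card_singleton]

end

theorem exists_wsF_flip_ne {p : ℕ} [Fact p.Prime] (hp4 : 4 < p) (X : ZMod p → Bool) :
    ∃ i, wsF (update X i (!X i)) ≠ wsF X := by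
  by_contra! hX
  set s := wsS X with hs
  have hs0 : s ≠ 0 := fun h => wsF_flip_zero_ne h (hX 0)
  cases hXs : X s
  · have hfalse : ∀ i, X i = false :=
      ZMod.forall_of_add_mem hs0 hXs fun i hi => by
        rw [add_comm, apply_wsS_add_eq (hX i) hi hs0, hXs]
    exact hs0 (by simp [hs, wsS, hfalse])
  · have htwo : (2 : ZMod p) ≠ 0 := fun h => by
      have := Nat.le_of_dvd two_pos ((ZMod.natCast_eq_zero_iff 2 p).mp (by exact_mod_cast h))
      omega
    have hhalf : s / 2 + s / 2 = s := by rw [← two_mul, mul_div_cancel₀ _ htwo]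
    have hXhalf : X (s / 2) = false := by
      by_contra h
      exact wsF_flip_ne_of_add_self hhalf hXs (by simpa using h) (hX _)
    refine absurd (ZMod.prime_le_four_of_sub_mem (univ.filter (X · = true)) ?_ hs0
      (wsS_eq_sum_filter X).symm ?_ ?_) (by omega)
    · exact (ne_of_mem_of_not_mem' (mem_univ (s / 2)) (by simp [hXhalf])).symm
    · intro i hi
      have hne : s - i ≠ i := fun h => by
        rw [show i = s / 2 by rw [eq_div_iff htwo]; linear_combination -h] at hi
        simp [hXhalf] at hi
      simpa using (apply_wsS_sub_eq (hX i) (by simpa using hi) hne).trans hXs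
    · intro i hi
      simpa using (apply_wsS_add_eq (hX i) (by simpa using hi) hs0).trans hXs

theorem stmt_9 (p : ℕ) (hp : p.Prime) (hp4 : 4 < p) [NeZero p] :
    (∀ X : ZMod p → Bool, 1 ≤ wsSens X) ∧
      wsSens (fun i : ZMod p => decide (i = 0)) = 1 := by
  have : Fact p.Prime := ⟨hp⟩
  exact ⟨fun X => wsSens_pos_iff.mpr (exists_wsF_flip_ne hp4 X), wsSens_indicator_zero⟩
end
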